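/- arXiv:2410.04043 — 2 statements merged into one kernel-verified Lean document; each statement's English description precedes it below -/
import Mathlib

section
/- Under the unique-optimum assumption, suppose 0 < δ < ∞ and δ ≤ δ̄_p. Then the primal δ-sublevel set equals the convex hull of n−m+1 points: X_δ = Conv({x*} ∪ {x^1, …, x^{n−m}}), where x^j := x* + (δ/s*_{m+j})·u^j for j = 1,…,n−m. -/
/-!
Since `B` is invertible, every `x` with `Ax = b` is `x = x* + ∑ⱼ x_{m+j} u^j`, and
`cᵀu^j = s*_{m+j}` (complementary slackness), so `cᵀx − cᵀx* = ∑ⱼ s*_{m+j} x_{m+j}`.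
For `x ∈ X_δ` the weights `λⱼ = s*_{m+j} x_{m+j} / δ` are nonnegative with sum at most `1`,
and `x = (1 − ∑ λⱼ) x* + ∑ λⱼ x^j`. Conversely each `x^j` is feasible: along `u^j` the ratio
test reaches an adjacent vertex `x* + t u^j`, whose objective error `t s*_{m+j}` is at least
`δ̄_p ≥ δ`, so the step `δ / s*_{m+j}` stays within the edge.
-/

open Matrix
open scoped BigOperators

noncomputable section

namespace LPPaper

/-- Euclidean norm of a finite real vector. -/
def enorm {k : ℕ} (v : Fin k → ℝ) : ℝ := Real.sqrt (∑ i, (v i) ^ 2)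

/-- ℓ₁ norm of a finite real vector. -/
def l1 {k : ℕ} (v : Fin k → ℝ) : ℝ := ∑ i, |v i|

/-- Spectral norm (operator 2-norm w.r.t. Euclidean norms) of a real matrix. -/
def specNorm {α β : Type*} [Fintype α] [Fintype β] [DecidableEq β] (M : Matrix α β ℝ) : ℝ :=
  ‖LinearMap.toContinuousLinearMap (Matrix.toEuclideanLin M)‖

variable {m n : ℕ}

/-- Embedding of basic indices (the first `m` coordinates). -/
def bIdx (hmn : m ≤ n) (i : Fin m) : Fin n := Fin.castLE hmn i

/-- Embedding of nonbasic indices (the last `n - m` coordinates). -/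
def nIdx (hmn : m ≤ n) (j : Fin (n - m)) : Fin n := ⟨m + j.val, by have := j.isLt; omega⟩

/-- The basis matrix `B`: the first `m` columns of `A`. -/
def Bmat (hmn : m ≤ n) (A : Matrix (Fin m) (Fin n) ℝ) : Matrix (Fin m) (Fin m) ℝ :=
  Matrix.of fun i j => A i (bIdx hmn j)

/-- The nonbasic matrix `N`: the last `n - m` columns of `A`. -/
def Nmat (hmn : m ≤ n) (A : Matrix (Fin m) (Fin n) ℝ) : Matrix (Fin m) (Fin (n - m)) ℝ :=
  Matrix.of fun i j => A i (nIdx hmn j)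

/-- The simplex tableau `B⁻¹N` at the optimal basis. -/
def BN (hmn : m ≤ n) (A : Matrix (Fin m) (Fin n) ℝ) : Matrix (Fin m) (Fin (n - m)) ℝ :=
  (Bmat hmn A)⁻¹ * Nmat hmn A

/-- `q := Aᵀ(AAᵀ)⁻¹ b`. -/
def qvec (A : Matrix (Fin m) (Fin n) ℝ) (b : Fin m → ℝ) : Fin n → ℝ :=
  Aᵀ *ᵥ ((A * Aᵀ)⁻¹ *ᵥ b)

/-- Primal feasibility: `Ax = b`, `x ≥ 0`. -/
def PrimalFeasible (A : Matrix (Fin m) (Fin n) ℝ) (b : Fin m → ℝ) (x : Fin n → ℝ) : Prop :=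
  A *ᵥ x = b ∧ ∀ i, 0 ≤ x i

/-- Dual feasibility: `Aᵀy + s = c`, `s ≥ 0`. -/
def DualFeasible (A : Matrix (Fin m) (Fin n) ℝ) (c : Fin n → ℝ) (y : Fin m → ℝ)
    (s : Fin n → ℝ) : Prop :=
  Aᵀ *ᵥ y + s = c ∧ ∀ i, 0 ≤ s i

/-- The unique-optimum assumption (Assumption 1 of the paper), with the optimal basis being
(after a permutation of the variables) the set of the first `m` indices: the rows of `A` are
linearly independent, `x*` is the unique primal optimal solution, `(y*, s*)` the unique dual
optimal solution, the basis matrix `B` is invertible, `x*ᵢ > 0` exactly for the first `m`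
indices and `s*ᵢ > 0` exactly for the remaining indices. -/
structure UniqueOpt (hmn : m ≤ n) (A : Matrix (Fin m) (Fin n) ℝ) (b : Fin m → ℝ)
    (c : Fin n → ℝ) (xstar : Fin n → ℝ) (ystar : Fin m → ℝ) (sstar : Fin n → ℝ) : Prop where
  rows_indep : LinearIndependent ℝ (fun i => A i)
  primal_feas : PrimalFeasible A b xstar
  primal_opt : ∀ x, PrimalFeasible A b x → c ⬝ᵥ xstar ≤ c ⬝ᵥ x
  primal_uniq : ∀ x, PrimalFeasible A b x → c ⬝ᵥ x = c ⬝ᵥ xstar → x = xstar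
  dual_feas : DualFeasible A c ystar sstar
  dual_opt : ∀ y s, DualFeasible A c y s → b ⬝ᵥ y ≤ b ⬝ᵥ ystar
  dual_uniq : ∀ y s, DualFeasible A c y s → b ⬝ᵥ y = b ⬝ᵥ ystar → y = ystar ∧ s = sstar
  basis_isUnit : IsUnit (Bmat hmn A).det
  xstar_supp : ∀ i : Fin n, 0 < xstar i ↔ (i : ℕ) < m
  sstar_supp : ∀ i : Fin n, 0 < sstar i ↔ m ≤ (i : ℕ)

/-- The `max` factor appearing in the geometric condition number `Φ`. -/
def PhiFactor (hmn : m ≤ n) (A : Matrix (Fin m) (Fin n) ℝ) (xstar sstar : Fin n → ℝ) : ℝ :=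
  max (⨆ j : Fin (n - m),
        Real.sqrt ((∑ i, (BN hmn A i j) ^ 2) + 1) / sstar (nIdx hmn j))
      (⨆ i : Fin m,
        Real.sqrt ((∑ j, (BN hmn A i j) ^ 2) + 1) / xstar (bIdx hmn i))

/-- The geometric condition number `Φ`. -/
def Phi (hmn : m ≤ n) (A : Matrix (Fin m) (Fin n) ℝ) (xstar sstar : Fin n → ℝ) : ℝ :=
  (l1 xstar + l1 sstar) * PhiFactor hmn A xstar sstar


/-- The primal `δ`-sublevel set `X_δ`. -/
def Xlev (A : Matrix (Fin m) (Fin n) ℝ) (b : Fin m → ℝ) (c : Fin n → ℝ)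
    (xstar : Fin n → ℝ) (δ : ℝ) : Set (Fin n → ℝ) :=
  {x | PrimalFeasible A b x ∧ c ⬝ᵥ x - c ⬝ᵥ xstar ≤ δ}

/-- The direction `u^j` of the `j`-th edge emanating from the optimal solution:
`u^j` restricted to the first `m` coordinates is `-B⁻¹N_{·,j}`, the `(m+j)`-th
coordinate is `1`, and all other coordinates are `0`. -/
def uvec (hmn : m ≤ n) (A : Matrix (Fin m) (Fin n) ℝ) (j : Fin (n - m)) : Fin n → ℝ :=
  fun i => if h : (i : ℕ) < m then -(BN hmn A ⟨i, h⟩ j)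
    else if (i : ℕ) = m + (j : ℕ) then 1 else 0

section Indices

variable (hmn : m ≤ n)

theorem sum_eq_sum_bIdx_add_sum_nIdx {M : Type*} [AddCommMonoid M] (f : Fin n → M) :
    ∑ k, f k = ∑ i, f (bIdx hmn i) + ∑ j, f (nIdx hmn j) := by
  rw [← (finSumFinEquiv.trans (finCongr (Nat.add_sub_cancel' hmn))).sum_comp f,
    Fintype.sum_sum_type]
  rfl

theorem forall_iff_forall_bIdx_and_forall_nIdx {P : Fin n → Prop} :
    (∀ k, P k) ↔ (∀ i, P (bIdx hmn i)) ∧ ∀ j, P (nIdx hmn j) := by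
  refine ⟨fun hP => ⟨fun i => hP _, fun j => hP _⟩, fun ⟨hB, hN⟩ k => ?_⟩
  by_cases hk : (k : ℕ) < m
  · exact hB ⟨k, hk⟩
  · simpa [nIdx, Nat.add_sub_cancel' (not_lt.mp hk)] using hN ⟨k - m, by omega⟩

variable (A : Matrix (Fin m) (Fin n) ℝ)

theorem uvec_bIdx (j : Fin (n - m)) (i : Fin m) :
    uvec hmn A j (bIdx hmn i) = -BN hmn A i j := by
  simp [uvec, bIdx]

theorem uvec_nIdx (j j' : Fin (n - m)) :
    uvec hmn A j (nIdx hmn j') = if j' = j then 1 else 0 := by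
  simp [uvec, nIdx, Fin.ext_iff]

theorem mulVec_eq_Bmat_add_Nmat (v : Fin n → ℝ) :
    A *ᵥ v = Bmat hmn A *ᵥ (v ∘ bIdx hmn) + Nmat hmn A *ᵥ (v ∘ nIdx hmn) := by
  ext i
  exact sum_eq_sum_bIdx_add_sum_nIdx hmn fun k => A i k * v k

end Indices

section Basis

variable (hmn : m ≤ n) {A : Matrix (Fin m) (Fin n) ℝ}

theorem mulVec_uvec (hB : IsUnit (Bmat hmn A).det) (j : Fin (n - m)) :
    A *ᵥ uvec hmn A j = 0 := by
  have hbasic : uvec hmn A j ∘ bIdx hmn = -(BN hmn A *ᵥ Pi.single j 1) := by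
    ext i; simp [uvec_bIdx]
  have hnonbasic : uvec hmn A j ∘ nIdx hmn = Pi.single j 1 := by
    ext j'; simp [uvec_nIdx, Pi.single_apply]
  rw [mulVec_eq_Bmat_add_Nmat hmn, hbasic, hnonbasic, mulVec_neg, BN, mulVec_mulVec,
    ← Matrix.mul_assoc, mul_nonsing_inv _ hB, Matrix.one_mul, neg_add_cancel]

theorem eq_zero_of_mulVec_eq_zero_of_nIdx (hB : IsUnit (Bmat hmn A).det) {w : Fin n → ℝ}
    (hw : A *ᵥ w = 0) (hN : ∀ j, w (nIdx hmn j) = 0) : w = 0 := by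
  have hN' : w ∘ nIdx hmn = 0 := funext hN
  rw [mulVec_eq_Bmat_add_Nmat hmn, hN', mulVec_zero, add_zero] at hw
  have hB' : w ∘ bIdx hmn = 0 := Matrix.eq_zero_of_mulVec_eq_zero hB.ne_zero hw
  funext k
  revert k
  exact (forall_iff_forall_bIdx_and_forall_nIdx hmn).2 ⟨congrFun hB', hN⟩

theorem eq_sum_uvec_of_mulVec_eq_zero (hB : IsUnit (Bmat hmn A).det) {w : Fin n → ℝ}
    (hw : A *ᵥ w = 0) :
    w = ∑ j, w (nIdx hmn j) • uvec hmn A j := by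
  refine sub_eq_zero.mp (eq_zero_of_mulVec_eq_zero_of_nIdx hmn hB ?_ fun j => ?_)
  · simp [mulVec_sub, mulVec_sum, mulVec_smul, mulVec_uvec hmn hB, hw]
  · simp [Finset.sum_apply, uvec_nIdx]

end Basis

theorem mem_extremePoints_primalFeasible_of_support {A : Matrix (Fin m) (Fin n) ℝ} {b : Fin m → ℝ}
    {v : Fin n → ℝ} (hv : PrimalFeasible A b v)
    (hker : ∀ w, A *ᵥ w = 0 → (∀ k, v k = 0 → w k = 0) → w = 0) :
    v ∈ Set.extremePoints ℝ {x | PrimalFeasible A b x} := by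
  refine mem_extremePoints_iff_left.2 ⟨hv, fun y hy z hz ⟨a, a', ha, ha', haa, hyz⟩ => ?_⟩
  have hsupp : ∀ k, v k = 0 → (y - z) k = 0 := fun k hk => by
    have hk' : a * y k + a' * z k = 0 := by rw [← hk, ← hyz]; rfl
    have := hy.2 k
    have := hz.2 k
    simp only [Pi.sub_apply]
    nlinarith
  have hyz' : y = z := sub_eq_zero.mp (hker _ (by rw [mulVec_sub, hy.1, hz.1, sub_self]) hsupp)
  rw [← hyz, ← hyz', ← add_smul, haa, one_smul]

theorem exists_ratio_test {ι : Type*} [Fintype ι] (x d : ι → ℝ) (hx : ∀ i, 0 < x i)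
    (hd : ∃ i, 0 < d i) :
    ∃ t > 0, (∀ i, t * d i ≤ x i) ∧ ∃ i₀, 0 < d i₀ ∧ t * d i₀ = x i₀ := by
  obtain ⟨i, hi⟩ := hd
  obtain ⟨i₀, hi₀, hmin⟩ := (Finset.univ.filter fun i => 0 < d i).exists_min_image
    (fun i => x i / d i) ⟨i, by simpa using hi⟩
  simp only [Finset.mem_filter, Finset.mem_univ, true_and] at hi₀ hmin
  refine ⟨x i₀ / d i₀, div_pos (hx i₀) hi₀, fun i => ?_, i₀, hi₀, div_mul_cancel₀ _ hi₀.ne'⟩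
  rcases le_or_gt (d i) 0 with hdi | hdi
  · exact (mul_nonpos_of_nonneg_of_nonpos (div_pos (hx i₀) hi₀).le hdi).trans (hx i).le
  · exact (le_div_iff₀ hdi).mp (hmin i hdi)

theorem add_sum_smul_mem_convexHull {𝕜 E ι : Type*} [Field 𝕜] [LinearOrder 𝕜]
    [IsStrictOrderedRing 𝕜] [AddCommGroup E] [Module 𝕜 E] [Fintype ι] (p : E) (v : ι → E)
    {μ : ι → 𝕜} (hμ : ∀ i, 0 ≤ μ i) (hμ₁ : ∑ i, μ i ≤ 1) :
    p + ∑ i, μ i • v i ∈ convexHull 𝕜 ({p} ∪ Set.range fun i => p + v i) := by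
  have hcomb : p + ∑ i, μ i • v i = ∑ o : Option ι,
      Option.elim o (1 - ∑ i, μ i) μ • Option.elim o p (fun i => p + v i) := by
    simp only [Fintype.sum_option, Option.elim_none, Option.elim_some, smul_add,
      Finset.sum_add_distrib, ← Finset.sum_smul, sub_smul, one_smul]
    abel
  rw [hcomb]
  refine (convex_convexHull 𝕜 _).sum_mem (fun o _ => ?_) (by simp [Fintype.sum_option])
    fun o _ => subset_convexHull 𝕜 _ ?_
  · cases o with
    | none => simpa using hμ₁
    | some i => exact hμ i
  · cases o with
    | none => exact Or.inl rfl
    | some i => exact Or.inr ⟨i, rfl⟩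

theorem convex_setOf_primalFeasible (A : Matrix (Fin m) (Fin n) ℝ) (b : Fin m → ℝ) :
    Convex ℝ {x | PrimalFeasible A b x} := by
  rintro x ⟨hxA, hx⟩ y ⟨hyA, hy⟩ a a' ha ha' haa
  refine ⟨by rw [mulVec_add, mulVec_smul, mulVec_smul, hxA, hyA, ← add_smul, haa, one_smul],
    fun k => ?_⟩
  have := hx k
  have := hy k
  simp only [Pi.add_apply, Pi.smul_apply, smul_eq_mul]
  positivity

theorem convex_xlev (A : Matrix (Fin m) (Fin n) ℝ) (b : Fin m → ℝ) (c xstar : Fin n → ℝ)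
    (δ : ℝ) : Convex ℝ (Xlev A b c xstar δ) := by
  have hcost : Convex ℝ {x : Fin n → ℝ | c ⬝ᵥ x ≤ δ + c ⬝ᵥ xstar} :=
    convex_halfSpace_le ⟨dotProduct_add c, fun t x => dotProduct_smul t c x⟩ _
  convert (convex_setOf_primalFeasible A b).inter hcost using 1
  ext x
  simp [Xlev]

namespace UniqueOpt

variable {hmn : m ≤ n} {A : Matrix (Fin m) (Fin n) ℝ} {b : Fin m → ℝ} {c : Fin n → ℝ}
  {xstar : Fin n → ℝ} {ystar : Fin m → ℝ} {sstar : Fin n → ℝ}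

theorem xstar_nIdx (h : UniqueOpt hmn A b c xstar ystar sstar) (j : Fin (n - m)) :
    xstar (nIdx hmn j) = 0 :=
  le_antisymm (not_lt.mp fun hpos => by simpa [nIdx] using (h.xstar_supp _).mp hpos)
    (h.primal_feas.2 _)

theorem sstar_bIdx (h : UniqueOpt hmn A b c xstar ystar sstar) (i : Fin m) :
    sstar (bIdx hmn i) = 0 :=
  le_antisymm (not_lt.mp fun hpos => not_le.mpr i.isLt ((h.sstar_supp _).mp hpos))
    (h.dual_feas.2 _)

theorem xstar_bIdx_pos (h : UniqueOpt hmn A b c xstar ystar sstar) (i : Fin m) :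
    0 < xstar (bIdx hmn i) :=
  (h.xstar_supp _).mpr (by simp [bIdx])

theorem sstar_nIdx_pos (h : UniqueOpt hmn A b c xstar ystar sstar) (j : Fin (n - m)) :
    0 < sstar (nIdx hmn j) :=
  (h.sstar_supp _).mpr (by simp [nIdx])

theorem dotProduct_uvec (h : UniqueOpt hmn A b c xstar ystar sstar) (j : Fin (n - m)) :
    c ⬝ᵥ uvec hmn A j = sstar (nIdx hmn j) := by
  rw [← h.dual_feas.1, add_dotProduct, mulVec_transpose, ← dotProduct_mulVec,
    mulVec_uvec hmn h.basis_isUnit, dotProduct_zero, zero_add, dotProduct,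
    sum_eq_sum_bIdx_add_sum_nIdx hmn]
  simp [h.sstar_bIdx, uvec_nIdx]

theorem eq_xstar_add_sum_uvec (h : UniqueOpt hmn A b c xstar ystar sstar) {x : Fin n → ℝ}
    (hx : A *ᵥ x = b) : x = xstar + ∑ j, x (nIdx hmn j) • uvec hmn A j := by
  have hker : A *ᵥ (x - xstar) = 0 := by rw [mulVec_sub, hx, h.primal_feas.1, sub_self]
  rw [← sub_eq_iff_eq_add', eq_sum_uvec_of_mulVec_eq_zero hmn h.basis_isUnit hker]
  simp [h.xstar_nIdx]

theorem cost_sub_eq_sum (h : UniqueOpt hmn A b c xstar ystar sstar) {x : Fin n → ℝ}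
    (hx : A *ᵥ x = b) :
    c ⬝ᵥ x - c ⬝ᵥ xstar = ∑ j, sstar (nIdx hmn j) * x (nIdx hmn j) := by
  conv_lhs => rw [h.eq_xstar_add_sum_uvec hx]
  simp [dotProduct_add, dotProduct_sum, dotProduct_smul, h.dotProduct_uvec, mul_comm]

theorem cost_sub_edge (h : UniqueOpt hmn A b c xstar ystar sstar) (j : Fin (n - m)) (t : ℝ) :
    c ⬝ᵥ (xstar + t • uvec hmn A j) - c ⬝ᵥ xstar = t * sstar (nIdx hmn j) := by
  rw [dotProduct_add, dotProduct_smul, h.dotProduct_uvec, smul_eq_mul, add_sub_cancel_left]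

theorem primalFeasible_edge (h : UniqueOpt hmn A b c xstar ystar sstar) (j : Fin (n - m))
    {t : ℝ} (ht : 0 ≤ t) (hbasic : ∀ i, t * BN hmn A i j ≤ xstar (bIdx hmn i)) :
    PrimalFeasible A b (xstar + t • uvec hmn A j) := by
  refine ⟨by rw [mulVec_add, mulVec_smul, mulVec_uvec hmn h.basis_isUnit, smul_zero, add_zero,
    h.primal_feas.1], (forall_iff_forall_bIdx_and_forall_nIdx hmn).2 ⟨fun i => ?_, fun j' => ?_⟩⟩
  · simpa [uvec_bIdx, ← sub_eq_add_neg] using hbasic i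
  · simp only [Pi.add_apply, Pi.smul_apply, smul_eq_mul, uvec_nIdx, h.xstar_nIdx]
    split_ifs <;> simp [ht]

theorem edge_mem_extremePoints (h : UniqueOpt hmn A b c xstar ystar sstar) {j : Fin (n - m)}
    {t : ℝ} (hfeas : PrimalFeasible A b (xstar + t • uvec hmn A j)) {i₀ : Fin m}
    (hi₀ : BN hmn A i₀ j ≠ 0) (hleave : t * BN hmn A i₀ j = xstar (bIdx hmn i₀)) :
    xstar + t • uvec hmn A j ∈ Set.extremePoints ℝ {x | PrimalFeasible A b x} := by
  refine mem_extremePoints_primalFeasible_of_support hfeas fun w hw hsupp => ?_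
  have hoff : ∀ j' ≠ j, w (nIdx hmn j') = 0 := fun j' hj' =>
    hsupp _ (by simp [uvec_nIdx, hj', h.xstar_nIdx])
  have hw_eq : w = w (nIdx hmn j) • uvec hmn A j := by
    have hsum := eq_sum_uvec_of_mulVec_eq_zero hmn h.basis_isUnit hw
    rwa [Finset.sum_eq_single j (fun j' _ hj' => by rw [hoff j' hj', zero_smul]) (by simp)]
      at hsum
  have hleave' : w (bIdx hmn i₀) = 0 :=
    hsupp _ (by simp [uvec_bIdx, ← hleave])
  rw [hw_eq] at hleave' ⊢
  simp only [Pi.smul_apply, smul_eq_mul, uvec_bIdx, mul_neg, neg_eq_zero,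
    mul_eq_zero, hi₀, or_false] at hleave'
  rw [hleave', zero_smul]

theorem div_mul_BN_le_xstar (h : UniqueOpt hmn A b c xstar ystar sstar) {δ : ℝ} (hδpos : 0 < δ)
    (hδbar : ∀ x ∈ Set.extremePoints ℝ {x | PrimalFeasible A b x}, x ≠ xstar →
      δ ≤ c ⬝ᵥ x - c ⬝ᵥ xstar)
    (j : Fin (n - m)) (i : Fin m) :
    δ / sstar (nIdx hmn j) * BN hmn A i j ≤ xstar (bIdx hmn i) := by
  have hs := h.sstar_nIdx_pos j
  rcases le_or_gt (BN hmn A i j) 0 with hnonpos | hpos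
  · exact (mul_nonpos_of_nonneg_of_nonpos (div_pos hδpos hs).le hnonpos).trans
      (h.xstar_bIdx_pos i).le
  obtain ⟨t, ht, hbound, i₀, hi₀, hleave⟩ := exists_ratio_test (fun i => xstar (bIdx hmn i))
    (fun i => BN hmn A i j) h.xstar_bIdx_pos ⟨i, hpos⟩
  have hgap : δ ≤ t * sstar (nIdx hmn j) := by
    rw [← h.cost_sub_edge j t]
    refine hδbar _ (h.edge_mem_extremePoints (h.primalFeasible_edge j ht.le hbound) hi₀.ne'
      hleave) fun heq => ?_
    have hzero := h.cost_sub_edge j t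
    rw [heq, sub_self] at hzero
    exact (mul_pos ht hs).ne hzero
  calc δ / sstar (nIdx hmn j) * BN hmn A i j ≤ t * BN hmn A i j :=
        mul_le_mul_of_nonneg_right ((div_le_iff₀ hs).2 hgap) hpos.le
    _ ≤ xstar (bIdx hmn i) := hbound i

end UniqueOpt

/-- Lemma 4 of the paper. Under the unique-optimum assumption, if
`0 < δ ≤ δ̄_p` (where `δ̄_p` is the smallest nonzero objective error among extreme points
of the primal feasible set), then the primal `δ`-sublevel set is the convex hull of
`x*` and the `n-m` points `x^j := x* + (δ/s*_{m+j})·u^j`. -/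
theorem sublevel_set_convexHull (m n : ℕ) (hmn : m ≤ n)
    (A : Matrix (Fin m) (Fin n) ℝ) (b : Fin m → ℝ) (c : Fin n → ℝ)
    (xstar : Fin n → ℝ) (ystar : Fin m → ℝ) (sstar : Fin n → ℝ)
    (h : UniqueOpt hmn A b c xstar ystar sstar)
    (δ : ℝ) (hδpos : 0 < δ)
    -- `δ ≤ δ̄_p`: every extreme point of `F_p` other than `x*` has objective error at least `δ`
    (hδbar : ∀ x ∈ Set.extremePoints ℝ {x | PrimalFeasible A b x}, x ≠ xstar →
      δ ≤ c ⬝ᵥ x - c ⬝ᵥ xstar) :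
    Xlev A b c xstar δ =
      convexHull ℝ ({xstar} ∪ Set.range fun j : Fin (n - m) =>
        xstar + (δ / sstar (nIdx hmn j)) • uvec hmn A j) := by
  have hs := h.sstar_nIdx_pos
  apply subset_antisymm
  · rintro x ⟨hx, hgap⟩
    rw [h.cost_sub_eq_sum hx.1] at hgap
    have hx_eq : x = xstar + ∑ j, (sstar (nIdx hmn j) * x (nIdx hmn j) / δ) •
        (δ / sstar (nIdx hmn j)) • uvec hmn A j := by
      conv_lhs => rw [h.eq_xstar_add_sum_uvec hx.1]
      refine congrArg _ (Finset.sum_congr rfl fun j _ => ?_)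
      rw [smul_smul]
      field_simp [(hs j).ne']
    rw [hx_eq]
    refine add_sum_smul_mem_convexHull _ _ (fun j => ?_) ?_
    · have := hx.2 (nIdx hmn j)
      have := hs j
      positivity
    · rwa [← Finset.sum_div, div_le_one hδpos]
  · refine convexHull_min ?_ (convex_xlev A b c xstar δ)
    rintro _ (rfl | ⟨j, rfl⟩)
    · exact ⟨h.primal_feas, by simpa using hδpos.le⟩
    · refine ⟨h.primalFeasible_edge j (div_pos hδpos (hs j)).le
        (h.div_mul_BN_le_xstar hδpos hδbar j), ?_⟩
      rw [h.cost_sub_edge, div_mul_cancel₀ _ (hs j).ne']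

end LPPaper
end
end

section
/- Let A = [B N] be a real m×n matrix (m ≤ n) with linearly independent rows, where B (the first m columns) is invertible and N is the remaining n−m columns. Let Q be any real (n−m)×n matrix with linearly independent rows such that Null(Q) = Im(Aᵀ). Write Q_Θ for the first m columns of Q and Q_Θ̄ for the last n−m columns. Then Q_Θ̄ is invertible and Q_Θ̄⁻¹ Q_Θ = −(B⁻¹N)ᵀ. -/
open Matrix
open scoped BigOperators

noncomputable section

namespace LPPaper

variable {m n : ℕ}

/-- Splitting `Fin n` into the first `m` and last `n - m` indices. -/
def splitEquiv (hmn : m ≤ n) : Fin m ⊕ Fin (n - m) ≃ Fin n where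
  toFun := Sum.elim (bIdx hmn) (nIdx hmn)
  invFun j := if h : (j : ℕ) < m then Sum.inl ⟨j, h⟩ else Sum.inr ⟨(j : ℕ) - m, by omega⟩
  left_inv x := by
    cases x with
    | inl i => simp [bIdx, i.isLt]
    | inr j => simp [nIdx]
  right_inv j := by
    by_cases h : (j : ℕ) < m
    · simp [h, bIdx, Fin.ext_iff]
    · simp [h, nIdx, Fin.ext_iff]; omega

lemma sum_split (hmn : m ≤ n) (f : Fin n → ℝ) :
    ∑ j, f j = (∑ i : Fin m, f (bIdx hmn i)) + ∑ j : Fin (n - m), f (nIdx hmn j) := by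
  rw [← (splitEquiv hmn).sum_comp f, Fintype.sum_sum_type]
  rfl

/-- Lemma 7 of the paper. Let `A = [B N]` have linearly independent
rows with `B` invertible, and let `Q` be any `(n-m)×n` matrix with linearly independent
rows such that `Null(Q) = Im(Aᵀ)`.  Then the last `n-m` columns of `Q` form an invertible
matrix `Q_Θ̄`, and `Q_Θ̄⁻¹ Q_Θ = -(B⁻¹N)ᵀ` where `Q_Θ` is the first `m` columns of `Q`. -/
theorem QThetaBar_inv_QTheta (m n : ℕ) (hmn : m ≤ n)
    (A : Matrix (Fin m) (Fin n) ℝ)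
    (hA : LinearIndependent ℝ (fun i => A i))
    (hB : IsUnit (Bmat hmn A).det)
    (Q : Matrix (Fin (n - m)) (Fin n) ℝ)
    (hQ : LinearIndependent ℝ (fun i => Q i))
    (hker : LinearMap.ker Q.mulVecLin = LinearMap.range (Aᵀ).mulVecLin) :
    IsUnit (Matrix.of fun i (j : Fin (n - m)) => Q i (nIdx hmn j)).det ∧
    (Matrix.of fun i (j : Fin (n - m)) => Q i (nIdx hmn j))⁻¹ *
        (Matrix.of fun i (j : Fin m) => Q i (bIdx hmn j)) =
      -(BN hmn A)ᵀ := by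

  set QT : Matrix (Fin (n - m)) (Fin m) ℝ :=
    Matrix.of fun i (j : Fin m) => Q i (bIdx hmn j) with hQT
  set QB : Matrix (Fin (n - m)) (Fin (n - m)) ℝ :=
    Matrix.of fun i (j : Fin (n - m)) => Q i (nIdx hmn j) with hQB
  have hBt : IsUnit ((Bmat hmn A)ᵀ).det := by rwa [Matrix.det_transpose]
  -- Q * Aᵀ = 0
  have hQA : Q * Aᵀ = 0 := by
    ext i k
    have h1 : (Q * Aᵀ) *ᵥ Pi.single k 1 = 0 := by
      rw [← Matrix.mulVec_mulVec]
      have hmem : Aᵀ *ᵥ Pi.single k 1 ∈ LinearMap.range (Aᵀ).mulVecLin :=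
        ⟨Pi.single k 1, rfl⟩
      rw [← hker] at hmem
      exact hmem
    have h2 := congrFun h1 i
    simpa [Matrix.mulVec_single] using h2
  -- decomposition of Q * Aᵀ
  have hdecomp : QT * (Bmat hmn A)ᵀ + QB * (Nmat hmn A)ᵀ = 0 := by
    rw [← hQA]
    ext i k
    simp only [Matrix.add_apply, Matrix.mul_apply, Matrix.transpose_apply, Bmat, Nmat,
      hQT, hQB, Matrix.of_apply]
    rw [sum_split hmn (fun j => Q i j * A k j)]
  -- QB has trivial kernel
  have hinj : ∀ w : Fin (n - m) → ℝ, QB *ᵥ w = 0 → w = 0 := by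
    intro w hw
    set x : Fin n → ℝ := fun j =>
      if h : (j : ℕ) < m then 0 else w ⟨(j : ℕ) - m, by have := j.isLt; omega⟩ with hx
    have hxb : ∀ p : Fin m, x (bIdx hmn p) = 0 := by
      intro p; simp [hx, bIdx, p.isLt]
    have hxn : ∀ q : Fin (n - m), x (nIdx hmn q) = w q := by
      intro q; simp [hx, nIdx]
    have hQx : Q *ᵥ x = 0 := by
      funext i
      have hwi := congrFun hw i
      simp only [Matrix.mulVec, dotProduct, hQB, Matrix.of_apply,
        Pi.zero_apply] at hwi ⊢
      rw [sum_split hmn (fun j => Q i j * x j)]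
      simp only [hxb, hxn, mul_zero, Finset.sum_const_zero, zero_add]
      exact hwi
    have hxmem : x ∈ LinearMap.range (Aᵀ).mulVecLin := by
      rw [← hker]; exact hQx
    obtain ⟨y, hy⟩ := hxmem
    have hBy : (Bmat hmn A)ᵀ *ᵥ y = 0 := by
      funext p
      have h0 : x (bIdx hmn p) = 0 := hxb p
      rw [← hy] at h0
      simpa [Matrix.mulVecLin_apply, Matrix.mulVec, Matrix.vecMul, dotProduct, Bmat, mul_comm] using h0
    have hy0 : y = 0 := by
      have hinjB := Matrix.mulVec_injective_iff_isUnit.mpr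
        ((Matrix.isUnit_iff_isUnit_det _).mpr hBt)
      apply hinjB
      simp [hBy]
    have hx0 : x = 0 := by rw [← hy, hy0]; simp [Matrix.mulVecLin_apply]
    funext q
    have := hxn q
    rw [hx0] at this
    exact this.symm
  have hQBdet : IsUnit QB.det := by
    rw [← Matrix.isUnit_iff_isUnit_det, ← Matrix.mulVec_injective_iff_isUnit]
    intro w1 w2 h12
    have h := hinj (w1 - w2) (by rw [Matrix.mulVec_sub, h12, sub_self])
    exact sub_eq_zero.mp h
  refine ⟨hQBdet, ?_⟩
  have hBTinv : (Bmat hmn A)ᵀ * ((Bmat hmn A)ᵀ)⁻¹ = 1 := Matrix.mul_nonsing_inv _ hBt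
  have hQBinv : QB⁻¹ * QB = 1 := Matrix.nonsing_inv_mul _ hQBdet
  have h1 : QT = -(QB * (Nmat hmn A)ᵀ) * ((Bmat hmn A)ᵀ)⁻¹ := by
    have h2 : QT * (Bmat hmn A)ᵀ = -(QB * (Nmat hmn A)ᵀ) :=
      eq_neg_of_add_eq_zero_left hdecomp
    calc QT = QT * ((Bmat hmn A)ᵀ * ((Bmat hmn A)ᵀ)⁻¹) := by rw [hBTinv, Matrix.mul_one]
      _ = QT * (Bmat hmn A)ᵀ * ((Bmat hmn A)ᵀ)⁻¹ := by rw [Matrix.mul_assoc]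
      _ = -(QB * (Nmat hmn A)ᵀ) * ((Bmat hmn A)ᵀ)⁻¹ := by rw [h2]
  rw [h1, Matrix.neg_mul, Matrix.mul_neg, ← Matrix.mul_assoc, ← Matrix.mul_assoc,
    hQBinv, Matrix.one_mul, BN, Matrix.transpose_mul, Matrix.transpose_nonsing_inv]


end LPPaper
end
end
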